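/- For every real z > 0 and every integer j ≥ 1, ∫₀^∞ (1/a)·e^{−z/(2a)} (z/(2a))^{j+1} / (a·j!) da − ∫₀^∞ (1/a)·e^{−z/(2a)} (z/(2a))^j / (a·(j−1)!) da = 2/z. That is, E[1/M_{j+1}] − E[1/M_j] = 2/z, a quantity independent of j. -/

import Mathlib

open MeasureTheory Real

/-- Substituting `a = x⁻¹` turns this into Euler's integral for `Gamma s`. -/
theorem integral_rpow_neg_mul_exp_neg_div_Ioi {s c : ℝ} (hs : 0 < s) (hc : 0 < c) :
    ∫ a in Set.Ioi (0 : ℝ), a ^ (-s - 1) * exp (-(c / a)) = (1 / c) ^ s * Gamma s := by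
  rw [← integral_comp_rpow_Ioi _ (neg_ne_zero.mpr one_ne_zero),
    ← integral_rpow_mul_exp_neg_mul_Ioi hs hc]
  refine setIntegral_congr_fun measurableSet_Ioi fun x (hx : 0 < x) => ?_
  rw [smul_eq_mul, ← rpow_mul hx.le, rpow_neg_one, div_inv_eq_mul, ← mul_assoc, abs_neg, abs_one,
    one_mul, ← rpow_add hx]
  ring_nf

theorem integral_inv_mul_exp_neg_div_mul_pow_Ioi {z : ℝ} (hz : 0 < z) (m : ℕ) :
    ∫ a in Set.Ioi (0 : ℝ),
        (1 / a) * (exp (-z / (2 * a)) * (z / (2 * a)) ^ (m + 1) / (a * (Nat.factorial m))) =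
      2 * (m + 1) / z := by
  have hc : 0 < z / 2 := by positivity
  have hs : (0 : ℝ) < m + 2 := by positivity
  calc _ = ∫ a in Set.Ioi (0 : ℝ),
          (z / 2) ^ (m + 1) / (Nat.factorial m) *
            (a ^ (-(m + 2 : ℝ) - 1) * exp (-(z / 2 / a))) := by
        refine setIntegral_congr_fun measurableSet_Ioi fun a (ha : 0 < a) => ?_
        rw [show -(m + 2 : ℝ) - 1 = -((m + 3 : ℕ) : ℝ) by push_cast; ring, rpow_neg ha.le,
          rpow_natCast, div_pow, mul_pow, div_pow]
        field_simp
        ring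
    _ = (z / 2) ^ (m + 1) / (Nat.factorial m) *
          ((1 / (z / 2)) ^ (m + 2 : ℝ) * Gamma (m + 2)) := by
        rw [integral_const_mul, integral_rpow_neg_mul_exp_neg_div_Ioi hs hc]
    _ = 2 * (m + 1) / z := by
        rw [show (m + 2 : ℝ) = ((m + 1 : ℕ) : ℝ) + 1 by push_cast; ring, Gamma_nat_eq_factorial,
          ← Nat.cast_add_one, rpow_natCast, Nat.factorial_succ]
        push_cast
        rw [one_div, inv_pow, div_pow, div_pow]
        field_simp
        ring

theorem expectation_inv_Mj_difference (z : ℝ) (hz : 0 < z) (j : ℕ) (hj : 1 ≤ j) :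
    (∫ a in Set.Ioi (0:ℝ),
        (1 / a) * (Real.exp (-z / (2 * a)) * (z / (2 * a)) ^ (j + 1) / (a * (Nat.factorial j))))
      - (∫ a in Set.Ioi (0:ℝ),
        (1 / a) * (Real.exp (-z / (2 * a)) * (z / (2 * a)) ^ j / (a * (Nat.factorial (j - 1)))))
      = 2 / z := by
  obtain ⟨m, rfl⟩ := Nat.exists_eq_add_of_le' hj
  rw [integral_inv_mul_exp_neg_div_mul_pow_Ioi hz (m + 1), Nat.add_sub_cancel,
    integral_inv_mul_exp_neg_div_mul_pow_Ioi hz m]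
  push_cast
  ring
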